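/- In the setting of the previous statement, suppose additionally that Z = BA is a Demmler–Reinsch design matrix, i.e. A is invertible with AᵀBᵀBA = nI_d and AᵀRA = diag(0,…,0,γ_{q+1},…,γ_d) with the first q diagonal entries zero and γ_j > 0 for j > q, and that the first q columns of Z span the same subspace of ℝⁿ as the columns of X. Then, expressing b = Au, the proper conditional O-splines prior density factorizes as p̃(u | τ²) = Π_{j=1}^q N₁(u_j; 0, τ²_poly) · Π_{j=q+1}^d N₁(u_j; 0, τ²/γ_j), i.e. the transformed precision matrix Aᵀ(R/τ² + BᵀHB/(nτ²_poly))A is diagonal with entries 1/τ²_poly (q times) followed by γ_j/τ². -/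

import Mathlib

open Matrix

/-!
With `Z = B A`, the identity `AᵀBᵀHBA = ZᵀHZ` reduces the claim to computing `ZᵀHZ`.
The columns of `Z` are pairwise orthogonal (`ZᵀZ = n I`) and the first `q` of them span the
column space of `X`, so the projection `H` fixes those and annihilates the others, which are
orthogonal to that span. Hence `HZ = Z diag(1,…,1,0,…,0)` and `ZᵀHZ = n diag(1,…,1,0,…,0)`.
-/

namespace Matrix

variable {m n κ R : Type*} [Fintype m] [Fintype n] [DecidableEq n] [CommRing R]

theorem isUnit_det_of_rank_eq_card {K : Type*} [Field K] {A : Matrix n n K}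
    (h : A.rank = Fintype.card n) : IsUnit A.det := by
  rw [← isUnit_iff_isUnit_det, ← mulVec_surjective_iff_isUnit]
  have hrange : LinearMap.range A.mulVecLin = ⊤ :=
    Submodule.eq_top_of_finrank_eq (by rw [← rank, h, Module.finrank_fintype_fun_eq_card])
  exact LinearMap.range_eq_top.mp hrange

theorem dotProduct_eq_zero_of_mem_span {s : Set (m → R)} {v w : m → R}
    (hv : v ∈ Submodule.span R s) (h : ∀ u ∈ s, u ⬝ᵥ w = 0) : v ⬝ᵥ w = 0 := by
  induction hv using Submodule.span_induction with
  | mem u hu => exact h u hu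
  | zero => exact zero_dotProduct w
  | add x y _ _ hx hy => rw [add_dotProduct, hx, hy, add_zero]
  | smul c x _ hx => rw [smul_dotProduct, hx, smul_zero]

/-- The projection `H` onto the column space of `X`. -/
noncomputable def hatMatrix (X : Matrix m n R) : Matrix m m R :=
  X * (Xᵀ * X)⁻¹ * Xᵀ

section hatMatrix

variable {X : Matrix m n R}

theorem hatMatrix_mul_self (hX : IsUnit (Xᵀ * X).det) : hatMatrix X * X = X := by
  rw [hatMatrix, Matrix.mul_assoc, Matrix.mul_assoc, nonsing_inv_mul _ hX, Matrix.mul_one]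

theorem hatMatrix_mulVec_of_mem_span (hX : IsUnit (Xᵀ * X).det) {v : m → R}
    (hv : v ∈ Submodule.span R (Set.range X.col)) : hatMatrix X *ᵥ v = v := by
  rw [← range_mulVecLin] at hv
  obtain ⟨c, rfl⟩ := hv
  rw [mulVecLin_apply, mulVec_mulVec, hatMatrix_mul_self hX]

theorem hatMatrix_mulVec_of_transpose_mulVec_eq_zero {w : m → R} (hw : Xᵀ *ᵥ w = 0) :
    hatMatrix X *ᵥ w = 0 := by
  rw [hatMatrix, ← mulVec_mulVec, hw, mulVec_zero]

theorem hatMatrix_mul_of_span_cols_eq [Fintype κ] [DecidableEq κ] (hX : IsUnit (Xᵀ * X).det)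
    {Z : Matrix m κ R} (horth : ∀ j k, j ≠ k → Z.col j ⬝ᵥ Z.col k = 0)
    {s : Set κ} [DecidablePred (· ∈ s)]
    (hspan : Submodule.span R (Z.col '' s) = Submodule.span R (Set.range X.col)) :
    hatMatrix X * Z = Z * diagonal (fun k => if k ∈ s then (1 : R) else 0) := by
  ext i k
  rw [mul_diagonal]
  change (hatMatrix X *ᵥ Z.col k) i = _
  split_ifs with hk
  · have hmem : Z.col k ∈ Submodule.span R (Set.range X.col) :=
      hspan ▸ Submodule.subset_span ⟨k, hk, rfl⟩
    rw [hatMatrix_mulVec_of_mem_span hX hmem, mul_one, col_apply]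
  · have horth_X : Xᵀ *ᵥ Z.col k = 0 := by
      funext j
      refine dotProduct_eq_zero_of_mem_span (s := Z.col '' s)
        (hspan ▸ Submodule.subset_span ⟨j, rfl⟩) ?_
      rintro _ ⟨l, hl, rfl⟩
      exact horth l k (ne_of_mem_of_not_mem hl hk)
    rw [hatMatrix_mulVec_of_transpose_mulVec_eq_zero horth_X, mul_zero, Pi.zero_apply]

theorem transpose_mul_hatMatrix_mul_of_span_cols_eq [Fintype κ] [DecidableEq κ]
    (hX : IsUnit (Xᵀ * X).det) {Z : Matrix m κ R} {c : R} (hZ : Zᵀ * Z = c • 1)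
    {s : Set κ} [DecidablePred (· ∈ s)]
    (hspan : Submodule.span R (Z.col '' s) = Submodule.span R (Set.range X.col)) :
    Zᵀ * hatMatrix X * Z = c • diagonal (fun k => if k ∈ s then (1 : R) else 0) := by
  have horth : ∀ j k, j ≠ k → Z.col j ⬝ᵥ Z.col k = 0 := by
    intro j k hjk
    have hjk' : (Zᵀ * Z) j k = 0 := by rw [hZ, smul_apply, one_apply_ne hjk, smul_zero]
    exact hjk'
  rw [Matrix.mul_assoc, hatMatrix_mul_of_span_cols_eq hX horth hspan, ← Matrix.mul_assoc, hZ,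
    smul_mul, Matrix.one_mul]

end hatMatrix

end Matrix

theorem stmt_18_general (n d q : ℕ) (hq : 1 ≤ q)
    (B : Matrix (Fin n) (Fin d) ℝ)
    (R : Matrix (Fin d) (Fin d) ℝ)
    (X : Matrix (Fin n) (Fin q) ℝ) (hX : X.rank = q)
    (A : Matrix (Fin d) (Fin d) ℝ)
    (γ : Fin d → ℝ)
    (hZ : Aᵀ * (Bᵀ * B) * A = (n : ℝ) • 1)
    (hRA : Aᵀ * R * A = Matrix.diagonal γ)
    (hγ0 : ∀ j : Fin d, (j : ℕ) < q → γ j = 0)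
    (hZX : Submodule.span ℝ
        ((fun j : Fin d => fun i => (B * A) i j) '' {j | (j : ℕ) < q})
      = Submodule.span ℝ (Set.range fun j => fun i => X i j))
    (τ2 τp : ℝ) :
    let H : Matrix (Fin n) (Fin n) ℝ := X * (Xᵀ * X)⁻¹ * Xᵀ
    Aᵀ * ((1 / τ2) • R + (1 / ((n : ℝ) * τp)) • (Bᵀ * H * B)) * A
      = Matrix.diagonal (fun j : Fin d =>
          if (j : ℕ) < q then 1 / τp else γ j / τ2) := by
  intro H
  have hn : (n : ℝ) ≠ 0 := by
    have : q ≤ n := by simpa [hX] using X.rank_le_card_height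
    exact Nat.cast_ne_zero.mpr (by omega)
  have hXX : IsUnit (Xᵀ * X).det :=
    isUnit_det_of_rank_eq_card (by rw [rank_transpose_mul_self, hX, Fintype.card_fin])
  have hZZ : (B * A)ᵀ * (B * A) = (n : ℝ) • 1 := by
    rw [← hZ, transpose_mul]
    simp only [Matrix.mul_assoc]
  have hZHZ := transpose_mul_hatMatrix_mul_of_span_cols_eq hXX hZZ hZX
  calc Aᵀ * ((1 / τ2) • R + (1 / ((n : ℝ) * τp)) • (Bᵀ * H * B)) * A
      = (1 / τ2) • (Aᵀ * R * A)
          + (1 / ((n : ℝ) * τp)) • ((B * A)ᵀ * hatMatrix X * (B * A)) := by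
        simp only [Matrix.mul_add, Matrix.add_mul, Matrix.mul_smul, Matrix.smul_mul,
          transpose_mul, hatMatrix, H, Matrix.mul_assoc]
    _ = Matrix.diagonal (fun j : Fin d =>
          if (j : ℕ) < q then 1 / τp else γ j / τ2) := by
        rw [hRA, hZHZ, smul_smul, ← diagonal_smul, ← diagonal_smul, diagonal_add]
        congr 1
        funext j
        simp only [Pi.smul_apply, smul_eq_mul, Set.mem_ofPred_eq]
        split_ifs with hj
        · rw [hγ0 j hj, mul_zero, zero_add]
          field_simp
        · simp only [mul_zero, add_zero]
          ring

/-- Proposition 4(iii): in Demmler–Reinsch coordinates, the proper conditional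
O-splines prior factorizes into independent Gaussians — the transformed precision
matrix `Aᵀ(R/τ² + BᵀHB/(nτ²_poly))A` is diagonal with entries `1/τ²_poly` on the
first `q` (polynomial) coordinates and `γⱼ/τ²` on the remaining ones. -/
theorem stmt_18 (n d q : ℕ) (hq : 1 ≤ q) (hqd : q ≤ d)
    (B : Matrix (Fin n) (Fin d) ℝ) (hB : B.rank = d)
    (R : Matrix (Fin d) (Fin d) ℝ) (hR : R.PosSemidef)
    (hker : Module.finrank ℝ (LinearMap.ker R.mulVecLin) = q)
    (X : Matrix (Fin n) (Fin q) ℝ) (hX : X.rank = q)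
    (hspan : Submodule.span ℝ (Set.range fun j => fun i => X i j)
      = Submodule.map B.mulVecLin (LinearMap.ker R.mulVecLin))
    (A : Matrix (Fin d) (Fin d) ℝ) (hA : IsUnit A.det)
    (γ : Fin d → ℝ)
    (hZ : Aᵀ * (Bᵀ * B) * A = (n : ℝ) • 1)
    (hRA : Aᵀ * R * A = Matrix.diagonal γ)
    (hγ0 : ∀ j : Fin d, (j : ℕ) < q → γ j = 0)
    (hγpos : ∀ j : Fin d, q ≤ (j : ℕ) → 0 < γ j)
    (hZX : Submodule.span ℝ
        ((fun j : Fin d => fun i => (B * A) i j) '' {j | (j : ℕ) < q})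
      = Submodule.span ℝ (Set.range fun j => fun i => X i j))
    (τ2 τp : ℝ) (hτ : 0 < τ2) (hτp : 0 < τp) :
    let H : Matrix (Fin n) (Fin n) ℝ := X * (Xᵀ * X)⁻¹ * Xᵀ
    Aᵀ * ((1 / τ2) • R + (1 / ((n : ℝ) * τp)) • (Bᵀ * H * B)) * A
      = Matrix.diagonal (fun j : Fin d =>
          if (j : ℕ) < q then 1 / τp else γ j / τ2) :=
  stmt_18_general n d q hq B R X hX A γ hZ hRA hγ0 hZX τ2 τp
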